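/- arXiv:2110.08724 — 2 statements merged into one kernel-verified Lean document; each statement's English description precedes it below -/
import Mathlib

section
/- Let G be a graph and let G' be obtained from G by gluing a triangle onto G at a single vertex (i.e., adding two new vertices x, y, edges xy, xv, yv for some vertex v of G). Then ι(G', B2) = ι(G, B2). -/
open SimpleGraph

/-- `H` is contained in `G` as a (not necessarily induced) subgraph. -/
def ContainsSub {V : Type*} {W : Type*} (G : SimpleGraph V) (H : SimpleGraph W) : Prop :=
  ∃ f : W → V, Function.Injective f ∧ ∀ a b, H.Adj a b → G.Adj (f a) (f b)

/-- The diamond graph `B₂`: `K₄` minus one edge. -/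
def Diamond : SimpleGraph (Fin 4) :=
  (completeGraph (Fin 4)).deleteEdges {s(0, 1)}

/-- A graph is diamond-free if it contains no subgraph isomorphic to the diamond. -/
def DiamondFree {V : Type*} (G : SimpleGraph V) : Prop := ¬ ContainsSub G Diamond

/-- The closed neighborhood `N[S]` of a set of vertices. -/
def closedNbhd {V : Type*} (G : SimpleGraph V) (S : Set V) : Set V :=
  {v | v ∈ S ∨ ∃ u ∈ S, G.Adj u v}

/-- `S` is a `B₂`-isolating set of `G`. -/
def IsIsolatingB2 {V : Type*} (G : SimpleGraph V) (S : Set V) : Prop :=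
  DiamondFree (G.induce (closedNbhd G S)ᶜ)

/-- The `B₂`-isolation number `ι(G, B₂)`. -/
noncomputable def iotaB2 {V : Type*} (G : SimpleGraph V) : ℕ :=
  sInf {k | ∃ S : Set V, IsIsolatingB2 G S ∧ S.ncard = k}

/-- The exceptional graph `Y`: the square of the 9-cycle (4-regular on 9 vertices). -/
def Ygraph : SimpleGraph (ZMod 9) :=
  SimpleGraph.fromRel (fun a b => a - b = 1 ∨ a - b = 2)

/-- The graph obtained from `G` by gluing a triangle onto the vertex `v0`. -/
def glueTriangle {V : Type*} (G : SimpleGraph V) (v0 : V) : SimpleGraph (V ⊕ Fin 2) :=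
  SimpleGraph.fromRel (fun a b =>
    (∃ x y, a = Sum.inl x ∧ b = Sum.inl y ∧ G.Adj x y) ∨
    (a = Sum.inr 0 ∧ b = Sum.inr 1) ∨
    (∃ i : Fin 2, a = Sum.inl v0 ∧ b = Sum.inr i))
section Aux
variable {V : Type*} {G : SimpleGraph V} {v0 : V}

lemma glue_adj_inl_inl {x y : V} :
    (glueTriangle G v0).Adj (Sum.inl x) (Sum.inl y) ↔ G.Adj x y := by
  simp only [glueTriangle, fromRel_adj]
  constructor
  · rintro ⟨hne, h⟩
    rcases h with (⟨a,b,ha,hb,hab⟩|⟨h1,h2⟩|⟨i,h1,h2⟩)|(⟨a,b,ha,hb,hab⟩|⟨h1,h2⟩|⟨i,h1,h2⟩) <;>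
      simp_all <;> exact hab.symm
  · intro h
    exact ⟨by simp [h.ne], Or.inl (Or.inl ⟨x, y, rfl, rfl, h⟩)⟩

lemma glue_adj_inr {a : V ⊕ Fin 2} {j : Fin 2} (h : (glueTriangle G v0).Adj a (Sum.inr j)) :
    a = Sum.inl v0 ∨ a = Sum.inr (j + 1) := by
  rw [glueTriangle, fromRel_adj] at h
  obtain ⟨hne, h⟩ := h
  rcases h with (⟨x,y,hx,hy,hxy⟩|⟨h1,h2⟩|⟨i,h1,h2⟩)|(⟨x,y,hx,hy,hxy⟩|⟨h1,h2⟩|⟨i,h1,h2⟩) <;>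
    simp_all <;> fin_cases j <;> simp_all <;> decide

lemma diamond_adj {i j : Fin 4} :
    Diamond.Adj i j ↔ (i ≠ j ∧ ¬(i = 0 ∧ j = 1) ∧ ¬(i = 1 ∧ j = 0)) := by
  simp only [Diamond, deleteEdges_adj, completeGraph_eq_top, top_adj, Set.mem_singleton_iff,
    Sym2.eq, Sym2.rel_iff', Prod.mk.injEq, Prod.swap_prod_mk]
  tauto

lemma diamond_key : ∀ i : Fin 4, ∃ a b c : Fin 4, a ≠ b ∧ c ≠ i ∧ c ≠ a ∧ c ≠ b ∧
    Diamond.Adj i a ∧ Diamond.Adj i b ∧ Diamond.Adj c a ∧ Diamond.Adj c b := by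
  intro i
  fin_cases i
  · exact ⟨2, 3, 1, by simp only [diamond_adj]; decide⟩
  · exact ⟨2, 3, 0, by simp only [diamond_adj]; decide⟩
  · exact ⟨0, 1, 3, by simp only [diamond_adj]; decide⟩
  · exact ⟨0, 1, 2, by simp only [diamond_adj]; decide⟩

lemma univ_isolating {W : Type*} (H : SimpleGraph W) : IsIsolatingB2 H Set.univ := by
  rintro ⟨f, hinj, hadj⟩
  exact (f 0).2 (Or.inl (Set.mem_univ _))

lemma isolating_inl {S : Set V} (hS : IsIsolatingB2 G S) :
    IsIsolatingB2 (glueTriangle G v0) (Sum.inl '' S) := by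
  rintro ⟨f, hinj, hadj⟩
  have hFinj : ∀ i j : Fin 4, (f i).1 = (f j).1 → i = j := fun i j h => hinj (Subtype.ext h)
  have hFadj : ∀ a b, Diamond.Adj a b → (glueTriangle G v0).Adj (f a).1 (f b).1 :=
    fun a b h => hadj a b h
  have hmem : ∀ i, (f i).1 ∉ closedNbhd (glueTriangle G v0) (Sum.inl '' S) := fun i => (f i).2
  have hinl : ∀ i, ∃ u, (f i).1 = Sum.inl u := by
    intro i
    cases hFi : (f i).1 with
    | inl u => exact ⟨u, rfl⟩
    | inr j =>
      exfalso
      obtain ⟨a, b, c, hab, hci, hca, hcb, hia, hib, hca', hcb'⟩ := diamond_key i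
      have h1 := glue_adj_inr ((hFi ▸ hFadj i a hia).symm)
      have h2 := glue_adj_inr ((hFi ▸ hFadj i b hib).symm)
      have hflip : j + 1 + 1 = j := by fin_cases j <;> decide
      have key : ∀ x y : Fin 4, c ≠ x → c ≠ y → (f x).1 = Sum.inr (j+1) → Diamond.Adj c x →
          (f y).1 = Sum.inl v0 → False := by
        intro x y hcx hcy hx hDcx hy
        rcases glue_adj_inr (hx ▸ hFadj c x hDcx) with h | h
        · exact hcy (hFinj c y (h.trans hy.symm))
        · rw [hflip] at h
          exact hci (hFinj c i (h.trans hFi.symm))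
      rcases h1 with h1 | h1 <;> rcases h2 with h2 | h2
      · exact hab (hFinj a b (h1.trans h2.symm))
      · exact key b a hcb hca h2 hcb' h1
      · exact key a b hca hcb h1 hca' h2
      · exact hab (hFinj a b (h1.trans h2.symm))
  choose u hu using hinl
  have hpush : ∀ w : V, w ∈ closedNbhd G S →
      Sum.inl w ∈ closedNbhd (glueTriangle G v0) (Sum.inl '' S) := by
    rintro w (hw | ⟨s, hs, hadj'⟩)
    · exact Or.inl ⟨w, hw, rfl⟩
    · exact Or.inr ⟨Sum.inl s, ⟨s, hs, rfl⟩, glue_adj_inl_inl.mpr hadj'⟩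
  have hcompl : ∀ i, u i ∈ (closedNbhd G S)ᶜ := by
    intro i hmemS
    exact hmem i (hu i ▸ hpush _ hmemS)
  refine hS ⟨fun i => ⟨u i, hcompl i⟩, ?_, ?_⟩
  · intro i j h
    apply hFinj
    rw [hu i, hu j]
    exact congrArg Sum.inl (congrArg Subtype.val h)
  · intro a b h
    have := hFadj a b h
    rw [hu a, hu b] at this
    show G.Adj (u a) (u b)
    exact glue_adj_inl_inl.mp this

lemma isolating_down {S' : Set (V ⊕ Fin 2)}
    (hS' : IsIsolatingB2 (glueTriangle G v0) S') :
    IsIsolatingB2 G (Sum.elim id (fun _ => v0) '' S') := by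
  set S : Set V := Sum.elim id (fun _ => v0) '' S' with hSdef
  rintro ⟨f, hinj, hadj⟩
  have hpull : ∀ w : V, Sum.inl w ∈ closedNbhd (glueTriangle G v0) S' → w ∈ closedNbhd G S := by
    rintro w (hw | ⟨s, hs, hadj'⟩)
    · exact Or.inl ⟨Sum.inl w, hw, rfl⟩
    · cases s with
      | inl t => exact Or.inr ⟨t, ⟨Sum.inl t, hs, rfl⟩, glue_adj_inl_inl.mp hadj'⟩
      | inr j =>
        rcases glue_adj_inr hadj'.symm with h | h
        · rw [Sum.inl.injEq] at h
          exact Or.inl (h ▸ ⟨Sum.inr j, hs, rfl⟩)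
        · exact absurd h (by simp)
  refine hS' ⟨fun i => ⟨Sum.inl (f i).1, fun hmem => (f i).2 (hpull _ hmem)⟩, ?_, ?_⟩
  · intro i j h
    exact hinj (Subtype.ext (Sum.inl_injective (congrArg Subtype.val h)))
  · intro a b h
    show (glueTriangle G v0).Adj (Sum.inl (f a).1) (Sum.inl (f b).1)
    have : G.Adj (f a).1 (f b).1 := hadj a b h
    exact glue_adj_inl_inl.mpr this

end Aux

theorem iotaB2_glueTriangle {V : Type*} [Fintype V] (G : SimpleGraph V) (v0 : V) :
    iotaB2 (glueTriangle G v0) = iotaB2 G := by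
  apply le_antisymm
  · have hne : {k | ∃ S : Set V, IsIsolatingB2 G S ∧ S.ncard = k}.Nonempty :=
      ⟨_, Set.univ, univ_isolating G, rfl⟩
    obtain ⟨S, hS, hcard⟩ := Nat.sInf_mem hne
    calc iotaB2 (glueTriangle G v0) ≤ (Sum.inl '' S).ncard :=
          Nat.sInf_le ⟨Sum.inl '' S, isolating_inl hS, rfl⟩
      _ = S.ncard := Set.ncard_image_of_injective _ Sum.inl_injective
      _ = iotaB2 G := hcard
  · have hne : {k | ∃ S : Set (V ⊕ Fin 2), IsIsolatingB2 (glueTriangle G v0) S ∧ S.ncard = k}.Nonempty :=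
      ⟨_, Set.univ, univ_isolating _, rfl⟩
    obtain ⟨S', hS', hcard⟩ := Nat.sInf_mem hne
    calc iotaB2 G ≤ (Sum.elim id (fun _ => v0) '' S').ncard :=
          Nat.sInf_le ⟨_, isolating_down hS', rfl⟩
      _ ≤ S'.ncard := Set.ncard_image_le S'.toFinite
      _ = iotaB2 (glueTriangle G v0) := hcard
end

section
/- For every vertex u of the exceptional graph Y, there exists a vertex v ≠ u such that the subgraph of Y induced by V(Y) \ ({u} ∪ N[v]) is isomorphic to the path P3 on three vertices. -/
open SimpleGraph

/-!
`Y` is the circulant graph on `ZMod 9` with connection set `{±1, ±2}`, so translations are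
automorphisms and it suffices to treat `u = 0`. There `v = 4` works: `N[4] = {2, …, 6}`, and
the remaining vertices `7, 8, 1` induce the path `7 – 8 – 1`.
-/

instance : DecidableRel Ygraph.Adj :=
  inferInstanceAs (DecidableRel (SimpleGraph.fromRel _).Adj)

lemma Ygraph_adj_add_right {a b : ZMod 9} (c : ZMod 9) :
    Ygraph.Adj (a + c) (b + c) ↔ Ygraph.Adj a b := by
  simp only [Ygraph, fromRel_adj, ne_eq, add_left_inj, add_sub_add_right_eq_sub]

def Ygraph.addRight (c : ZMod 9) : Ygraph ≃g Ygraph where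
  toEquiv := Equiv.addRight c
  map_rel_iff' := Ygraph_adj_add_right c

@[simp]
lemma Ygraph.addRight_apply (c a : ZMod 9) : Ygraph.addRight c a = a + c := rfl

namespace SimpleGraph.Iso

variable {V W X : Type*} {G : SimpleGraph V} {G' : SimpleGraph W}

lemma image_closedNbhd (φ : G ≃g G') (S : Set V) :
    φ '' closedNbhd G S = closedNbhd G' (φ '' S) := by
  ext x
  obtain ⟨x, rfl⟩ := φ.surjective x
  simp [closedNbhd, φ.injective.eq_iff, φ.surjective.exists, φ.map_adj_iff]

lemma nonempty_induce_compl_closedNbhd_iso (φ : G ≃g G') {u v : V} {H : SimpleGraph X}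
    (e : G.induce ({u} ∪ closedNbhd G {v})ᶜ ≃g H) :
    Nonempty (G'.induce ({φ u} ∪ closedNbhd G' {φ v})ᶜ ≃g H) := by
  have himage : φ '' ({u} ∪ closedNbhd G {v})ᶜ = ({φ u} ∪ closedNbhd G' {φ v})ᶜ := by
    rw [Set.image_compl_eq φ.bijective, Set.image_union, Set.image_singleton, φ.image_closedNbhd,
      Set.image_singleton]
  exact ⟨(φ.induce (himage ▸ φ.injective.injOn.bijOn_image)).symm.trans e⟩

end SimpleGraph.Iso

lemma Ygraph_compl_zero_closedNbhd_four :
    ({0} ∪ closedNbhd Ygraph {4})ᶜ = Set.range ![(7 : ZMod 9), 8, 1] := by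
  ext x
  simp only [closedNbhd, Set.mem_compl_iff, Set.mem_union, Set.mem_singleton_iff,
    Set.mem_ofPred_eq, exists_eq_left, Set.mem_range]
  revert x
  decide

def Ygraph.pathEmbedding : pathGraph 3 ↪g Ygraph where
  toFun := ![7, 8, 1]
  inj' := by decide
  map_rel_iff' {a b} := by
    have adj_iff : ∀ i j : Fin 3,
        Ygraph.Adj (![7, 8, 1] i) (![7, 8, 1] j) ↔ (pathGraph 3).Adj i j := by
      simp only [pathGraph_adj]
      decide
    exact adj_iff a b

lemma Ygraph_induce_compl_zero_closedNbhd_four :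
    Nonempty (Ygraph.induce ({0} ∪ closedNbhd Ygraph {4})ᶜ ≃g pathGraph 3) := by
  rw [Ygraph_compl_zero_closedNbhd_four]
  exact ⟨Ygraph.pathEmbedding.isoInduceRange.symm⟩

theorem Ygraph_induced_P3 :
    ∀ u : ZMod 9, ∃ v : ZMod 9, v ≠ u ∧
      Nonempty ((Ygraph.induce ({u} ∪ closedNbhd Ygraph {v})ᶜ) ≃g SimpleGraph.pathGraph 3) := by
  intro u
  refine ⟨4 + u, add_ne_right.mpr (by decide), ?_⟩
  obtain ⟨e⟩ := Ygraph_induce_compl_zero_closedNbhd_four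
  have := (Ygraph.addRight u).nonempty_induce_compl_closedNbhd_iso e
  rwa [Ygraph.addRight_apply, Ygraph.addRight_apply, zero_add] at this
end
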